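/- Let G be a finite connected simple graph with minimum degree at least 2 and girth at least 5 (every cycle of G has length at least 5). Then every vertex cover of G is an MEG-set of G. -/

import Mathlib

/-! Let `uv` be an edge with `u ∈ C`. If `v ∈ C`, the pair `u, v` monitors it. Otherwise `v` has a
second neighbour `w`, which lies in `C`; since `G` has no triangles, `dist u w = 2`, and since it
has no 4-cycles, `u - v - w` is the only walk of length two from `u` to `w`, so `u, w` monitor
`uv`. -/

open SimpleGraph

/-- A pair of vertices `u`, `v` monitors an edge `e` if `u` and `v` are reachable from
each other and `e` belongs to every shortest path (walk of length `G.dist u v`)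
between `u` and `v`. -/
def Monitors {V : Type*} (G : SimpleGraph V) (u v : V) (e : Sym2 V) : Prop :=
  G.Reachable u v ∧ ∀ p : G.Walk u v, p.length = G.dist u v → e ∈ p.edges

/-- A monitoring edge-geodetic set of `G`: every edge of `G` is monitored by some
pair of vertices of `M`. -/
def IsMEGSet {V : Type*} (G : SimpleGraph V) (M : Set V) : Prop :=
  ∀ e ∈ G.edgeSet, ∃ u ∈ M, ∃ v ∈ M, Monitors G u v e

/-- The monitoring edge-geodetic number of `G`: the minimum size of an MEG-set. -/
noncomputable def meg {V : Type*} [Fintype V] (G : SimpleGraph V) : ℕ :=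
  sInf {n : ℕ | ∃ M : Finset V, IsMEGSet G ↑M ∧ M.card = n}

namespace SimpleGraph

variable {V : Type*} {G : SimpleGraph V} {u v w : V}

lemma not_adj_of_mem_commonNeighbors (hg : 4 ≤ G.egirth) (hv : v ∈ G.commonNeighbors u w) :
    ¬ G.Adj u w := by
  intro huw
  obtain ⟨huv, hwv⟩ := G.mem_commonNeighbors.mp hv
  let c : G.Walk u u := .cons huv (.cons hwv.symm (.cons huw.symm .nil))
  have hc : c.IsCycle := by
    simp [c, Walk.cons_isCycle_iff, huv.ne, huw.ne, huw.ne.symm, huv.ne.symm, hwv.ne.symm]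
  have := hg.trans (egirth_le_length hc)
  norm_num [c] at this

lemma commonNeighbors_subsingleton (hg : 5 ≤ G.egirth) (huw : u ≠ w) :
    (G.commonNeighbors u w).Subsingleton := by
  intro v hv x hx
  by_contra hvx
  obtain ⟨huv, hwv⟩ := G.mem_commonNeighbors.mp hv
  obtain ⟨hux, hwx⟩ := G.mem_commonNeighbors.mp hx
  let c : G.Walk u u := .cons huv (.cons hwv.symm (.cons hwx (.cons hux.symm .nil)))
  have hc : c.IsCycle := by
    simp [c, Walk.cons_isCycle_iff, huv.ne, hux.ne, hwx.ne, huv.ne.symm, hwv.ne.symm,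
      hux.ne.symm, huw, hvx, huw.symm]
  have := hg.trans (egirth_le_length hc)
  norm_num [c] at this

lemma dist_eq_two_of_mem_commonNeighbors (hg : 4 ≤ G.egirth) (huw : u ≠ w)
    (hv : v ∈ G.commonNeighbors u w) : G.dist u w = 2 := by
  rw [dist, edist_eq_two_iff.mpr ⟨huw, not_adj_of_mem_commonNeighbors hg hv, v, hv⟩]
  rfl

lemma Walk.eq_of_length_eq_two (hg : 5 ≤ G.egirth) (huv : G.Adj u v) (hvw : G.Adj v w)
    (huw : u ≠ w) (p : G.Walk u w) (hp : p.length = 2) : p = .cons huv (.cons hvw .nil) := by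
  match p, hp with
  | .cons hux (.cons hxw .nil), _ =>
    obtain rfl := commonNeighbors_subsingleton hg huw
      (G.mem_commonNeighbors.mpr ⟨huv, hvw.symm⟩) (G.mem_commonNeighbors.mpr ⟨hux, hxw.symm⟩)
    rfl

lemma monitors_of_adj (h : G.Adj u v) : Monitors G u v s(u, v) := by
  refine ⟨h.reachable, fun p hp => ?_⟩
  rw [dist_eq_one_iff_adj.mpr h] at hp
  match p, hp with
  | .cons _ .nil, _ => simp

lemma monitors_of_adj_of_adj (hg : 5 ≤ G.egirth) (huv : G.Adj u v) (hvw : G.Adj v w)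
    (huw : u ≠ w) : Monitors G u w s(u, v) := by
  have hv : v ∈ G.commonNeighbors u w := G.mem_commonNeighbors.mpr ⟨huv, hvw.symm⟩
  refine ⟨huv.reachable.trans hvw.reachable, fun p hp => ?_⟩
  rw [dist_eq_two_of_mem_commonNeighbors ((by norm_num : (4 : ℕ∞) ≤ 5).trans hg) huw hv] at hp
  simp [p.eq_of_length_eq_two hg huv hvw huw hp]

lemma exists_adj_ne_of_two_le_degree [Fintype (G.neighborSet v)] (h : 2 ≤ G.degree v) (u : V) :
    ∃ w, G.Adj v w ∧ w ≠ u := by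
  rw [← card_neighborFinset_eq_degree] at h
  simpa using Finset.exists_mem_ne h u

end SimpleGraph

theorem vertexCover_isMEGSet_general {V : Type*} [Fintype V] (G : SimpleGraph V)
    [DecidableRel G.Adj]
    (hdeg : ∀ v : V, 2 ≤ G.degree v) (hgirth : 5 ≤ G.egirth)
    (C : Set V) (hC : ∀ u v : V, G.Adj u v → u ∈ C ∨ v ∈ C) :
    IsMEGSet G C := by
  suffices key : ∀ u v, G.Adj u v → u ∈ C → ∃ a ∈ C, ∃ b ∈ C, Monitors G a b s(u, v) by
    rintro ⟨u, v⟩ (huv : G.Adj u v)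
    rcases hC u v huv with hu | hv
    · exact key u v huv hu
    · simpa only [Sym2.eq_swap] using key v u huv.symm hv
  intro u v huv hu
  by_cases hv : v ∈ C
  · exact ⟨u, hu, v, hv, monitors_of_adj huv⟩
  obtain ⟨w, hvw, hwu⟩ := exists_adj_ne_of_two_le_degree (hdeg v) u
  exact ⟨u, hu, w, (hC v w hvw).resolve_left hv, monitors_of_adj_of_adj hgirth huv hvw hwu.symm⟩

/-- in a connected graph with minimum degree at least 2 and girth at
least 5, every vertex cover is an MEG-set. -/
theorem vertexCover_isMEGSet {V : Type*} [Fintype V] (G : SimpleGraph V)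
    [DecidableRel G.Adj] (hconn : G.Connected)
    (hdeg : ∀ v : V, 2 ≤ G.degree v) (hgirth : 5 ≤ G.egirth)
    (C : Set V) (hC : ∀ u v : V, G.Adj u v → u ∈ C ∨ v ∈ C) :
    IsMEGSet G C :=
  vertexCover_isMEGSet_general G hdeg hgirth C hC
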